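/- There is a pair of linear maps f^σ: Hₙ(F) → ⋁²M_{1,n}(F), Ě_{ij} ↦ e_i ∨ e_j, which is an isomorphism of Jordan pairs from V^(III)_n onto the tensor-shift (⋁²V^(I)_{1,n})^{[-4]}, and which is a similarity of the bilinear forms with multiplier 1/2: ⟨f(x), f(y)⟩ = (1/2)t^(III)(x,y). -/

import Mathlib

/-!
The map `x ↦ ½ ∑ᵢⱼ xᵢⱼ (eᵢ ∨ eⱼ)` sends `Ě_{ij}` to `eᵢ ∨ eⱼ`. Pairing `f x` with `eᵢ ∨ eⱼ`
under the permanental form returns the entry `xᵢⱼ` of a symmetric `x`; this gives injectivity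
on symmetric matrices and the multiplier `½`, while surjectivity comes from the basis
`eᵢ ∨ eⱼ`. Both sides of the homomorphism identity are trilinear and the `Ě_{ij}` span the
symmetric matrices (as `2` is invertible), so it suffices to compare them on generators.
There `{Ě_{i₁i₂}, Ě_{j₁j₂}, Ě_{k₁k₂}}` expands into the first four terms of the triple product
of `⋁²V^(I)`, and the shift by `-4 ⟨x, y⟩ z` cancels its fifth term `4 ⟨x, y⟩ z`.
-/

open Matrix Submodule

theorem LinearMap.eqOn_span₃ {R M N P Q : Type*} [CommSemiring R] [AddCommMonoid M]
    [AddCommMonoid N] [AddCommMonoid P] [AddCommMonoid Q] [Module R M] [Module R N]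
    [Module R P] [Module R Q] {L L' : M →ₗ[R] N →ₗ[R] P →ₗ[R] Q} {s : Set M} {t : Set N}
    {u : Set P} (h : ∀ x ∈ s, ∀ y ∈ t, ∀ z ∈ u, L x y z = L' x y z)
    {x : M} {y : N} {z : P} (hx : x ∈ span R s) (hy : y ∈ span R t) (hz : z ∈ span R u) :
    L x y z = L' x y z := by
  have hxy : ∀ x ∈ s, ∀ y ∈ t, L x y z = L' x y z := fun x hx y hy =>
    LinearMap.eqOn_span (fun z hz => h x hx y hy z hz) hz
  have hx' : ∀ x ∈ s, L x y z = L' x y z := fun x hx =>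
    LinearMap.eqOn_span (f := (L x).flip z) (g := (L' x).flip z) (fun y hy => hxy x hx y hy) hy
  exact LinearMap.eqOn_span (f := (L.flip y).flip z) (g := (L'.flip y).flip z) hx' hx

theorem Finset.sum_sum_eq_sum_add_two_mul_sum_sum_Ioi {ι R : Type*} [LinearOrder ι] [Fintype ι]
    [LocallyFiniteOrderTop ι] [LocallyFiniteOrderBot ι] [NonAssocSemiring R]
    {g : ι → ι → R} (hg : ∀ i j, g i j = g j i) :
    ∑ i, ∑ j, g i j = ∑ i, g i i + 2 * ∑ i, ∑ j ∈ Ioi i, g i j := by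
  classical
  have off_diag : ∑ j, ∑ i ∈ {j}ᶜ, g i j = 2 * ∑ i, ∑ j ∈ Ioi i, g i j := by
    rw [← sum_sum_Ioi_add_eq_sum_sum_off_diag, two_mul, ← sum_add_distrib]
    refine sum_congr rfl fun i _ => ?_
    rw [← sum_add_distrib]
    exact sum_congr rfl fun j _ => by rw [hg j i]
  rw [sum_comm, ← off_diag, ← sum_add_distrib]
  exact sum_congr rfl fun j _ => by rw [← sum_add_sum_compl {j}, sum_singleton]

def kroneckerDelta {ι R : Type*} [DecidableEq ι] [Zero R] [One R] (i j : ι) : R :=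
  if i = j then 1 else 0

section

local notation "δ" => kroneckerDelta

namespace Matrix

variable {ι R : Type*} [DecidableEq ι] [CommRing R]

def symSingle (i j : ι) : Matrix ι ι R := single i j 1 + single j i 1

theorem symSingle_transpose (i j : ι) : (symSingle (R := R) i j)ᵀ = symSingle i j := by
  simp [symSingle, add_comm]

variable [Fintype ι]

theorem single_one_mul_single_one (a b c d : ι) :
    single a b (1 : R) * single c d 1 = (δ b c : R) • single a d 1 := by
  rcases eq_or_ne b c with rfl | h
  · simp [kroneckerDelta]
  · simp [kroneckerDelta, h]

theorem symSingle_mul_mul_add_mul_mul (i₁ i₂ j₁ j₂ k₁ k₂ : ι) :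
    symSingle i₁ i₂ * symSingle j₁ j₂ * symSingle k₁ k₂
        + symSingle k₁ k₂ * symSingle j₁ j₂ * (symSingle i₁ i₂ : Matrix ι ι R)
      = ((δ i₂ j₁ : R) * δ k₂ j₂ + δ i₂ j₂ * δ k₂ j₁) • symSingle i₁ k₁
        + ((δ i₂ j₂ : R) * δ k₁ j₁ + δ i₂ j₁ * δ k₁ j₂) • symSingle i₁ k₂
        + ((δ i₁ j₂ : R) * δ k₂ j₁ + δ i₁ j₁ * δ k₂ j₂) • symSingle i₂ k₁
        + ((δ i₁ j₁ : R) * δ k₁ j₂ + δ i₁ j₂ * δ k₁ j₁) • symSingle i₂ k₂ := by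
  have hδ_comm : ∀ a b : ι, (δ a b : R) = δ b a := fun a b => by
    simp only [kroneckerDelta, eq_comm]
  simp only [symSingle, add_mul, mul_add, single_one_mul_single_one, smul_mul_assoc,
    smul_add, smul_smul]
  simp only [hδ_comm k₁, hδ_comm k₂, hδ_comm j₁ i₁, hδ_comm j₁ i₂, hδ_comm j₂ i₁,
    hδ_comm j₂ i₂]
  module

theorem sum_sum_smul_symSingle (x : Matrix ι ι R) :
    ∑ i, ∑ j, x i j • symSingle i j = x + xᵀ := by
  simp only [symSingle, smul_add, Finset.sum_add_distrib, smul_single, smul_eq_mul, mul_one]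
  rw [← matrix_eq_sum_single, Finset.sum_comm, matrix_eq_sum_single xᵀ]
  rfl

theorem mem_span_symSingle_of_transpose_eq {F : Type*} [Field F] (h2 : (2 : F) ≠ 0)
    {x : Matrix ι ι F} (hx : xᵀ = x) :
    x ∈ span F (Set.range fun p : ι × ι => symSingle p.1 p.2) := by
  have hx2 : x = (2 : F)⁻¹ • ∑ i, ∑ j, x i j • symSingle i j := by
    rw [sum_sum_smul_symSingle, hx, ← two_smul F x, smul_smul, inv_mul_cancel₀ h2, one_smul]
  rw [hx2]
  exact smul_mem _ _ <| sum_mem fun i _ => sum_mem fun j _ =>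
    smul_mem _ _ <| subset_span ⟨(i, j), rfl⟩

end Matrix

section TripleSystems

variable (R A : Type*) [CommSemiring R] [Semiring A] [Algebra R A]

def jordanTriple : A →ₗ[R] A →ₗ[R] A →ₗ[R] A :=
  (LinearMap.mul R A).compr₂ (LinearMap.mul R A)
    + (LinearMap.mul R A).flip.compr₂ (LinearMap.mul R A).flip

variable {R A}

theorem jordanTriple_apply (x y z : A) : jordanTriple R A x y z = x * y * z + z * y * x := by
  simp [jordanTriple, mul_assoc]

variable {V : Type*} [AddCommMonoid V] [Module R V]

def tensorShift (T : V →ₗ[R] V →ₗ[R] V →ₗ[R] V) (β : V →ₗ[R] V →ₗ[R] R) (t : R) :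
    V →ₗ[R] V →ₗ[R] V →ₗ[R] V :=
  T + t • β.compr₂ (LinearMap.lsmul R V)

theorem tensorShift_apply (T : V →ₗ[R] V →ₗ[R] V →ₗ[R] V) (β : V →ₗ[R] V →ₗ[R] R) (t : R)
    (x y z : V) : tensorShift T β t x y z = T x y z + (t * β x y) • z := by
  simp [tensorShift, mul_smul]

end TripleSystems

section SymLift

variable {ι F Λ : Type*} [Fintype ι] [Field F] [AddCommGroup Λ] [Module F Λ]

noncomputable def symLift (v : ι → ι → Λ) : Matrix ι ι F →ₗ[F] Λ where
  toFun x := (2 : F)⁻¹ • ∑ i, ∑ j, x i j • v i j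
  map_add' x y := by simp [add_smul, Finset.sum_add_distrib, smul_add]
  map_smul' c x := by
    simp only [Matrix.smul_apply, smul_eq_mul, mul_smul, ← Finset.smul_sum, RingHom.id_apply]
    rw [smul_comm]

theorem symLift_apply (v : ι → ι → Λ) (x : Matrix ι ι F) :
    symLift v x = (2 : F)⁻¹ • ∑ i, ∑ j, x i j • v i j := rfl

variable [DecidableEq ι]

def IsPermanentalPairing (β : Λ →ₗ[F] Λ →ₗ[F] F) (v : ι → ι → Λ) : Prop :=
  ∀ i₁ i₂ j₁ j₂, β (v i₁ i₂) (v j₁ j₂) = δ i₁ j₁ * δ i₂ j₂ + δ i₂ j₁ * δ i₁ j₂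

def IsSymSquareTriple (T : Λ →ₗ[F] Λ →ₗ[F] Λ →ₗ[F] Λ) (v : ι → ι → Λ) : Prop :=
  ∀ i₁ i₂ j₁ j₂ k₁ k₂, T (v i₁ i₂) (v j₁ j₂) (v k₁ k₂)
    = ((δ i₂ j₁ : F) * δ k₂ j₂ + δ i₂ j₂ * δ k₂ j₁) • v i₁ k₁
      + ((δ i₂ j₂ : F) * δ k₁ j₁ + δ i₂ j₁ * δ k₁ j₂) • v i₁ k₂
      + ((δ i₁ j₂ : F) * δ k₂ j₁ + δ i₁ j₁ * δ k₂ j₂) • v i₂ k₁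
      + ((δ i₁ j₁ : F) * δ k₁ j₂ + δ i₁ j₂ * δ k₁ j₁) • v i₂ k₂
      + ((4 : F) * (δ i₁ j₁ * δ i₂ j₂ + δ i₂ j₁ * δ i₁ j₂)) • v k₁ k₂

variable {v : ι → ι → Λ} {β : Λ →ₗ[F] Λ →ₗ[F] F} {T : Λ →ₗ[F] Λ →ₗ[F] Λ →ₗ[F] Λ}

theorem symLift_symSingle (h2 : (2 : F) ≠ 0) (hv : ∀ i j, v i j = v j i) (i j : ι) :
    symLift v (symSingle i j : Matrix ι ι F) = v i j := by
  simp only [symLift_apply, symSingle, Matrix.add_apply, single_apply, add_smul, ite_smul,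
    one_smul, zero_smul, ite_and, Finset.sum_add_distrib, Finset.sum_ite_irrel,
    Finset.sum_ite_eq, Finset.mem_univ, if_true, Finset.sum_const_zero, hv j i, ← two_smul F,
    smul_smul, inv_mul_cancel₀ h2]

theorem exists_transpose_eq_symLift_eq (h2 : (2 : F) ≠ 0) (hv : ∀ i j, v i j = v j i)
    (hspan : span F (Set.range (Function.uncurry v)) = ⊤) (y : Λ) :
    ∃ x : Matrix ι ι F, xᵀ = x ∧ symLift v x = y := by
  have hy : y ∈ span F (Set.range (Function.uncurry v)) := hspan ▸ mem_top
  induction hy using span_induction with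
  | mem y hy =>
    obtain ⟨⟨i, j⟩, rfl⟩ := hy
    exact ⟨symSingle i j, symSingle_transpose i j, symLift_symSingle h2 hv i j⟩
  | zero => exact ⟨0, transpose_zero, map_zero _⟩
  | add y y' _ _ hy hy' =>
    obtain ⟨⟨x, hx, rfl⟩, ⟨x', hx', rfl⟩⟩ := And.intro hy hy'
    exact ⟨x + x', by rw [transpose_add, hx, hx'], map_add _ _ _⟩
  | smul c y _ hy =>
    obtain ⟨x, hx, rfl⟩ := hy
    exact ⟨c • x, by rw [transpose_smul, hx], map_smul _ _ _⟩

theorem IsPermanentalPairing.pairing_symLift_gen (hβ : IsPermanentalPairing β v)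
    (h2 : (2 : F) ≠ 0) {x : Matrix ι ι F} (hx : xᵀ = x) (i j : ι) :
    β (symLift v x) (v i j) = x i j := by
  have hxji : x j i = x i j := congr_fun₂ hx i j
  simp only [symLift_apply, map_smul, map_sum, LinearMap.smul_apply, LinearMap.sum_apply,
    smul_eq_mul, hβ _ _ i j, kroneckerDelta, mul_add, mul_ite, mul_one, mul_zero,
    Finset.sum_add_distrib, Finset.sum_ite_eq', Finset.mem_univ, if_true, Finset.sum_ite_irrel,
    Finset.sum_const_zero, hxji, ← two_mul, ← mul_assoc, inv_mul_cancel₀ h2, one_mul]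

theorem IsPermanentalPairing.pairing_symLift_symLift (hβ : IsPermanentalPairing β v)
    (h2 : (2 : F) ≠ 0) {x : Matrix ι ι F} (hx : xᵀ = x) (y : Matrix ι ι F) :
    β (symLift v x) (symLift v y) = (2 : F)⁻¹ * ∑ i, ∑ j, x i j * y i j := by
  simp only [symLift_apply v y, map_smul, map_sum, hβ.pairing_symLift_gen h2 hx, smul_eq_mul,
    mul_comm]

theorem IsPermanentalPairing.injOn_symLift (hβ : IsPermanentalPairing β v) (h2 : (2 : F) ≠ 0) :
    Set.InjOn (symLift v) {x : Matrix ι ι F | xᵀ = x} := fun x hx x' hx' h => by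
  ext i j
  rw [← hβ.pairing_symLift_gen h2 hx, h, hβ.pairing_symLift_gen h2 hx']

theorem symLift_jordanTriple_symSingle (h2 : (2 : F) ≠ 0) (hv : ∀ i j, v i j = v j i)
    (hβ : IsPermanentalPairing β v) (hT : IsSymSquareTriple T v)
    (i₁ i₂ j₁ j₂ k₁ k₂ : ι) :
    symLift v
        (jordanTriple F (Matrix ι ι F) (symSingle i₁ i₂) (symSingle j₁ j₂) (symSingle k₁ k₂))
      = tensorShift T β (-4) (symLift v (symSingle i₁ i₂ : Matrix ι ι F))
          (symLift v (symSingle j₁ j₂ : Matrix ι ι F))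
          (symLift v (symSingle k₁ k₂ : Matrix ι ι F)) := by
  simp only [jordanTriple_apply, symSingle_mul_mul_add_mul_mul, map_add, map_smul,
    tensorShift_apply, symLift_symSingle h2 hv, hT i₁ i₂ j₁ j₂ k₁ k₂, hβ i₁ i₂ j₁ j₂]
  module

theorem symLift_jordanTriple (h2 : (2 : F) ≠ 0) (hv : ∀ i j, v i j = v j i)
    (hβ : IsPermanentalPairing β v) (hT : IsSymSquareTriple T v) {x y z : Matrix ι ι F}
    (hx : xᵀ = x) (hy : yᵀ = y) (hz : zᵀ = z) :
    symLift v (jordanTriple F _ x y z)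
      = tensorShift T β (-4) (symLift v x) (symLift v y) (symLift v z) := by
  have key := LinearMap.eqOn_span₃
    (L := (jordanTriple F _).compr₂ (LinearMap.llcomp F _ _ _ (symLift v)))
    (L' := ((tensorShift T β (-4)).compl₁₂ (symLift v) (symLift v)).compr₂
      (LinearMap.lcomp F Λ (symLift v))) ?_
    (mem_span_symSingle_of_transpose_eq h2 hx) (mem_span_symSingle_of_transpose_eq h2 hy)
    (mem_span_symSingle_of_transpose_eq h2 hz)
  · simpa only [LinearMap.compr₂_apply, LinearMap.llcomp_apply, LinearMap.compl₁₂_apply,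
      LinearMap.lcomp_apply] using key
  · rintro _ ⟨⟨i₁, i₂⟩, rfl⟩ _ ⟨⟨j₁, j₂⟩, rfl⟩ _ ⟨⟨k₁, k₂⟩, rfl⟩
    simpa only [LinearMap.compr₂_apply, LinearMap.llcomp_apply, LinearMap.compl₁₂_apply,
      LinearMap.lcomp_apply] using symLift_jordanTriple_symSingle h2 hv hβ hT i₁ i₂ j₁ j₂ k₁ k₂

end SymLift

end

/-- The pair of linear maps `f^σ : Hₙ(F) → ⋁²M_{1,n}(F)`,
`Ě_{ij} ↦ eᵢ ∨ eⱼ` is an isomorphism of Jordan pairs from `V^(III)_n` onto the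
tensor-shift `(⋁²V^(I)_{1,n})^{[-4]}` and a similarity of the bilinear forms with
multiplier `1/2`: `⟨f(x), f(y)⟩ = (1/2)t^(III)(x,y)`.  Here `Λ` together with the
symmetric product map `s` is the symmetric square of `M_{1,n}(F)` (pinned down by a basis
hypothesis), `β` its induced bilinear form (permanental minors) and `T` the triple product
of `⋁²V^(I)_{1,n}` obtained from the Faulkner construction, given on generators. -/
theorem type_III_is_shifted_symmetric_square
    (F : Type) [Field F] (hchar : (2 : F) ≠ 0) (n : ℕ)
    (Λ : Type) [AddCommGroup Λ] [Module F Λ]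
    (s : Matrix (Fin 1) (Fin n) F →ₗ[F] Matrix (Fin 1) (Fin n) F →ₗ[F] Λ)
    (hs : ∀ x y, s x y = s y x) :
    let e : Fin n → Matrix (Fin 1) (Fin n) F := fun i => Matrix.single 0 i 1
    let δ : Fin n → Fin n → F := fun i j => if i = j then 1 else 0
    let Echeck : Fin n → Fin n → Matrix (Fin n) (Fin n) F := fun i j =>
      Matrix.single i j 1 + Matrix.single j i 1
    ∀ (hbasis : ∃ bΛ : Module.Basis {p : Fin n × Fin n // p.1 ≤ p.2} F Λ,
      ∀ p : {p : Fin n × Fin n // p.1 ≤ p.2}, bΛ p = s (e p.1.1) (e p.1.2))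
    -- the bilinear form of ⋁²V^(I)_{1,n}
    (β : Λ →ₗ[F] Λ →ₗ[F] F)
    (hβ : ∀ i₁ i₂ j₁ j₂ : Fin n,
      β (s (e i₁) (e i₂)) (s (e j₁) (e j₂)) = δ i₁ j₁ * δ i₂ j₂ + δ i₂ j₁ * δ i₁ j₂)
    -- the triple product of ⋁²V^(I)_{1,n} (same on both halves of the pair)
    (T : Λ →ₗ[F] Λ →ₗ[F] Λ →ₗ[F] Λ)
    (hT : ∀ i₁ i₂ j₁ j₂ k₁ k₂ : Fin n,
      T (s (e i₁) (e i₂)) (s (e j₁) (e j₂)) (s (e k₁) (e k₂))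
        = (δ i₂ j₁ * δ k₂ j₂ + δ i₂ j₂ * δ k₂ j₁) • s (e i₁) (e k₁)
          + (δ i₂ j₂ * δ k₁ j₁ + δ i₂ j₁ * δ k₁ j₂) • s (e i₁) (e k₂)
          + (δ i₁ j₂ * δ k₂ j₁ + δ i₁ j₁ * δ k₂ j₂) • s (e i₂) (e k₁)
          + (δ i₁ j₁ * δ k₁ j₂ + δ i₁ j₂ * δ k₁ j₁) • s (e i₂) (e k₂)
          + (4 * (δ i₁ j₁ * δ i₂ j₂ + δ i₂ j₁ * δ i₁ j₂)) • s (e k₁) (e k₂)),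
    ∃ f : Matrix (Fin n) (Fin n) F →ₗ[F] Λ,
      -- f(Ě_{ij}) = eᵢ ∨ eⱼ
      (∀ i j : Fin n, f (Echeck i j) = s (e i) (e j)) ∧
      -- f is a bijection from the symmetric matrices onto ⋁²M_{1,n}(F)
      (∀ y : Λ, ∃! x : Matrix (Fin n) (Fin n) F, x.transpose = x ∧ f x = y) ∧
      -- f is a homomorphism onto the (-4)-tensor-shifted triple product
      (∀ x y z : Matrix (Fin n) (Fin n) F,
        x.transpose = x → y.transpose = y → z.transpose = z →
        f (x * y.transpose * z + z * y.transpose * x)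
          = T (f x) (f y) (f z) + ((-4 : F) * β (f x) (f y)) • f z) ∧
      -- f is a similarity of the bilinear forms with multiplier 1/2
      (∀ x y : Matrix (Fin n) (Fin n) F,
        x.transpose = x → y.transpose = y →
        β (f x) (f y) = (2 : F)⁻¹ *
          ((∑ i : Fin n, x i i * y i i)
            + 2 * ∑ i : Fin n, ∑ j ∈ Finset.Ioi i, x i j * y i j)) := by
  intro e δ Echeck hbasis β hβ T hT
  obtain ⟨b, hb⟩ := hbasis
  have hv : ∀ i j, s (e i) (e j) = s (e j) (e i) := fun _ _ => hs _ _
  have hspan : span F (Set.range fun p : Fin n × Fin n => s (e p.1) (e p.2)) = ⊤ :=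
    eq_top_iff.2 <| b.span_eq.ge.trans <| span_mono <| Set.range_subset_iff.2 fun p =>
      ⟨p.1, (hb p).symm⟩
  have hβ' : IsPermanentalPairing β fun i j => s (e i) (e j) := hβ
  refine ⟨symLift fun i j => s (e i) (e j), symLift_symSingle hchar hv, fun y => ?_,
    fun x y z hx hy hz => ?_, fun x y hx hy => ?_⟩
  · obtain ⟨x, hx, rfl⟩ := exists_transpose_eq_symLift_eq hchar hv hspan y
    exact ⟨x, ⟨hx, rfl⟩, fun x' hx' => hβ'.injOn_symLift hchar hx'.1 hx hx'.2⟩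
  · rw [hy, ← jordanTriple_apply (R := F), ← tensorShift_apply]
    exact symLift_jordanTriple hchar hv hβ' hT hx hy hz
  · rw [hβ'.pairing_symLift_symLift hchar hx, Finset.sum_sum_eq_sum_add_two_mul_sum_sum_Ioi]
    exact fun i j => congr_arg₂ (· * ·) (congr_fun₂ hx j i) (congr_fun₂ hy j i)
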